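/- Let W ⊆ (ℝ≥0)ⁿ be a closed max cone containing a nonzero vector, invariant under the max-times multiplication by A ∈ (ℝ≥0)^{n×n}. Then there exist a nonzero u ∈ W and λ ∈ ℝ≥0 with A ⊗ u = λ·u. -/

import Mathlib

open scoped NNReal

def MaxCone {n : ℕ} (W : Set (Fin n → ℝ≥0)) : Prop :=
  (0 : Fin n → ℝ≥0) ∈ W ∧
  (∀ x ∈ W, ∀ y ∈ W, x ⊔ y ∈ W) ∧
  (∀ r : ℝ≥0, ∀ x ∈ W, r • x ∈ W)

def maxMul {n : ℕ} (A : Matrix (Fin n) (Fin n) ℝ≥0) (v : Fin n → ℝ≥0) : Fin n → ℝ≥0 :=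
  fun i => Finset.univ.sup fun j => A i j * v j

/-!
Pass to a minimal coordinate face `{v ∈ W | supp v ⊆ T}` among those that contain a nonzero
vector and whose index set `T` is closed under the edges of `A` (`A i j ≠ 0` and `j ∈ T` force
`i ∈ T`); it is again an invariant closed max cone, with an element `w` of maximal support.
Let `λ` be the largest `μ` with `μ z ≤ A ⊗ z` for a nonzero `z` of the face; it exists because
the normalized vectors of the face form a compact set. If `λ = 0`, then `A ⊗ w = 0`: otherwise
minimality, applied to `supp (A ⊗ w)`, gives `ε w ≤ A ⊗ w` with `ε > 0`. If `λ > 0`, the orbit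
of a maximizer under `λ⁻¹ A` increases. A bounded orbit converges to an eigenvector. For an
unbounded one, the unbounded coordinates form an edge-closed set containing the support of a
normalized limit point, so by minimality they cover `supp w`; then `(λ⁻¹ A)^p w ≥ 2 w` for some
`p`, and `z = ⊔_{t < p} 2^{-t/p} (λ⁻¹ A)^t w` satisfies `2^{1/p} λ z ≤ A ⊗ z`, contradicting the
choice of `λ`.
-/

open Filter Topology Function Set

variable {n : ℕ}

section MaxMul

variable {A : Matrix (Fin n) (Fin n) ℝ≥0} {v : Fin n → ℝ≥0}

theorem mul_le_maxMul (A : Matrix (Fin n) (Fin n) ℝ≥0) (v : Fin n → ℝ≥0) (i j : Fin n) :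
    A i j * v j ≤ maxMul A v i :=
  Finset.le_sup (f := fun j => A i j * v j) (Finset.mem_univ j)

theorem maxMul_apply_eq_zero_iff {i : Fin n} : maxMul A v i = 0 ↔ ∀ j, A i j * v j = 0 := by
  simp only [maxMul]
  exact (Finset.sup_eq_bot_iff _ _).trans (by simp)

theorem maxMul_mono : Monotone (maxMul A) := fun _ _ h _ =>
  Finset.sup_mono_fun fun j _ => mul_le_mul_right (h j) _

theorem maxMul_smul (r : ℝ≥0) (v : Fin n → ℝ≥0) : maxMul A (r • v) = r • maxMul A v := by
  ext i
  simp only [maxMul, Pi.smul_apply, smul_eq_mul, NNReal.mul_finset_sup, mul_left_comm]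

theorem smul_maxMul (r : ℝ≥0) (A : Matrix (Fin n) (Fin n) ℝ≥0) (v : Fin n → ℝ≥0) :
    maxMul (r • A) v = r • maxMul A v := by
  ext i
  simp only [maxMul, Matrix.smul_apply, Pi.smul_apply, smul_eq_mul, NNReal.mul_finset_sup,
    mul_assoc]

theorem iterate_maxMul_smul (k : ℕ) (r : ℝ≥0) (v : Fin n → ℝ≥0) :
    (maxMul A)^[k] (r • v) = r • (maxMul A)^[k] v :=
  (Commute.iterate_left (f := maxMul A) (g := (r • ·)) (maxMul_smul r) k) v

theorem continuous_maxMul : Continuous (maxMul A) :=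
  continuous_pi fun _ =>
    Continuous.finset_sup_apply fun j _ => continuous_const.mul (continuous_apply j)

end MaxMul

section SupNorm

def supNorm (v : Fin n → ℝ≥0) : ℝ≥0 := Finset.univ.sup v

theorem le_supNorm (v : Fin n → ℝ≥0) (i : Fin n) : v i ≤ supNorm v :=
  Finset.le_sup (Finset.mem_univ i)

theorem le_supNorm_smul_one (v : Fin n → ℝ≥0) : v ≤ supNorm v • 1 := fun i => by
  simpa using le_supNorm v i

theorem supNorm_mono : Monotone (supNorm (n := n)) := fun _ _ h =>
  Finset.sup_mono_fun fun i _ => h i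

theorem supNorm_smul (r : ℝ≥0) (v : Fin n → ℝ≥0) : supNorm (r • v) = r * supNorm v :=
  (NNReal.mul_finset_sup r _ v).symm

theorem supNorm_eq_zero {v : Fin n → ℝ≥0} : supNorm v = 0 ↔ v = 0 := by
  rw [supNorm, ← bot_eq_zero, Finset.sup_eq_bot_iff, funext_iff]
  simp

theorem continuous_supNorm : Continuous (supNorm (n := n)) :=
  Continuous.finset_sup_apply fun i _ => continuous_apply i

theorem supNorm_inv_smul_self {v : Fin n → ℝ≥0} (hv : v ≠ 0) :
    supNorm ((supNorm v)⁻¹ • v) = 1 := by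
  rw [supNorm_smul, inv_mul_cancel₀ (supNorm_eq_zero.not.2 hv)]

end SupNorm

section Support

theorem ne_zero_of_le {v w : Fin n → ℝ≥0} (hv : v ≠ 0) (h : v ≤ w) : w ≠ 0 :=
  fun hw => hv (le_antisymm (hw ▸ h) zero_le)

theorem ne_zero_of_support_subset {v w : Fin n → ℝ≥0} (hv : v ≠ 0) (h : support v ⊆ support w) :
    w ≠ 0 :=
  fun hw => hv (support_eq_empty_iff.1 (subset_empty_iff.1 (by simpa [hw] using h)))

theorem exists_smul_le_of_support_subset {v w : Fin n → ℝ≥0} (h : support v ⊆ support w) :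
    ∃ c : ℝ≥0, c ≠ 0 ∧ c • v ≤ w := by
  set d := Finset.univ.sup fun i => v i / w i
  refine ⟨(d + 1)⁻¹, by positivity, fun i => ?_⟩
  by_cases hwi : w i = 0
  · simp [support_subset_iff'.1 h i (by simpa using hwi)]
  have hvi : v i ≤ (d + 1) * w i :=
    calc v i = v i / w i * w i := (div_mul_cancel₀ _ hwi).symm
      _ ≤ (d + 1) * w i := by
        gcongr
        exact (Finset.le_sup (f := fun i => v i / w i) (Finset.mem_univ i)).trans le_self_add
  calc (d + 1)⁻¹ * v i ≤ (d + 1)⁻¹ * ((d + 1) * w i) := by gcongr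
    _ = w i := inv_mul_cancel_left₀ (by positivity) _

def IsInvariantSupport (A : Matrix (Fin n) (Fin n) ℝ≥0) (T : Set (Fin n)) : Prop :=
  ∀ ⦃i j⦄, j ∈ T → A i j ≠ 0 → i ∈ T

theorem IsInvariantSupport.inter {A : Matrix (Fin n) (Fin n) ℝ≥0} {S T : Set (Fin n)}
    (hS : IsInvariantSupport A S) (hT : IsInvariantSupport A T) : IsInvariantSupport A (S ∩ T) :=
  fun _ _ hj hA => ⟨hS hj.1 hA, hT hj.2 hA⟩

theorem isInvariantSupport_smul_iff {A : Matrix (Fin n) (Fin n) ℝ≥0} {r : ℝ≥0} (hr : r ≠ 0)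
    {T : Set (Fin n)} : IsInvariantSupport (r • A) T ↔ IsInvariantSupport A T := by
  simp [IsInvariantSupport, hr]

theorem IsInvariantSupport.support_maxMul_subset {A : Matrix (Fin n) (Fin n) ℝ≥0}
    {T : Set (Fin n)} (hT : IsInvariantSupport A T) {v : Fin n → ℝ≥0} (hv : support v ⊆ T) :
    support (maxMul A v) ⊆ T := fun i hi => by
  obtain ⟨j, hj⟩ := not_forall.1 (maxMul_apply_eq_zero_iff.not.1 hi)
  exact hT (hv (right_ne_zero_of_mul hj)) (left_ne_zero_of_mul hj)

def supportedIn (W : Set (Fin n → ℝ≥0)) (T : Set (Fin n)) : Set (Fin n → ℝ≥0) :=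
  {v ∈ W | support v ⊆ T}

theorem isClosed_setOf_support_subset (T : Set (Fin n)) :
    IsClosed {v : Fin n → ℝ≥0 | support v ⊆ T} := by
  simp only [support_subset_iff', ofPred_forall]
  exact isClosed_iInter fun i => isClosed_iInter fun _ =>
    isClosed_eq (continuous_apply i) continuous_const

theorem IsClosed.supportedIn {W : Set (Fin n → ℝ≥0)} (hW : IsClosed W) (T : Set (Fin n)) :
    IsClosed (supportedIn W T) :=
  hW.inter (isClosed_setOf_support_subset T)

end Support

namespace MaxCone

variable {W : Set (Fin n → ℝ≥0)}

theorem zero_mem (hW : MaxCone W) : 0 ∈ W := hW.1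

theorem sup_mem (hW : MaxCone W) {x y : Fin n → ℝ≥0} (hx : x ∈ W) (hy : y ∈ W) :
    x ⊔ y ∈ W :=
  hW.2.1 x hx y hy

theorem smul_mem (hW : MaxCone W) (r : ℝ≥0) {x : Fin n → ℝ≥0} (hx : x ∈ W) : r • x ∈ W :=
  hW.2.2 r x hx

theorem finset_sup_mem (hW : MaxCone W) {ι : Type*} (s : Finset ι) {f : ι → Fin n → ℝ≥0}
    (hf : ∀ i ∈ s, f i ∈ W) : s.sup f ∈ W :=
  Finset.sup_induction hW.zero_mem (fun _ hx _ hy => hW.sup_mem hx hy) hf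

theorem supportedIn (hW : MaxCone W) (T : Set (Fin n)) : MaxCone (supportedIn W T) := by
  refine ⟨⟨hW.zero_mem, by simp⟩, fun x hx y hy => ⟨hW.sup_mem hx.1 hy.1, ?_⟩,
    fun r x hx => ⟨hW.smul_mem r hx.1, (support_const_smul_subset r x).trans hx.2⟩⟩
  intro i hi
  by_contra hiT
  simp [support_subset_iff'.1 hx.2 i hiT, support_subset_iff'.1 hy.2 i hiT] at hi

theorem mapsTo_smul (hW : MaxCone W) {A : Matrix (Fin n) (Fin n) ℝ≥0}
    (hinv : MapsTo (maxMul A) W W) (r : ℝ≥0) : MapsTo (maxMul (r • A)) W W := fun v hv => by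
  rw [smul_maxMul]
  exact hW.smul_mem r (hinv hv)

theorem exists_forall_support_subset (hW : MaxCone W) :
    ∃ w ∈ W, ∀ v ∈ W, support v ⊆ support w := by
  classical
  have hmax (i : Fin n) : ∃ g ∈ W, ∀ v ∈ W, v i ≠ 0 → g i ≠ 0 := by
    by_cases h : ∃ v ∈ W, v i ≠ 0
    · obtain ⟨g, hg, hgi⟩ := h
      exact ⟨g, hg, fun _ _ _ => hgi⟩
    · push Not at h
      exact ⟨0, hW.zero_mem, fun v hv hvi => (hvi (h v hv)).elim⟩
  choose g hgW hg using hmax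
  refine ⟨Finset.univ.sup g, hW.finset_sup_mem _ fun i _ => hgW i, fun v hv i hi => ?_⟩
  exact ((pos_of_ne_zero (hg i v hv hi)).trans_le
    (Finset.le_sup (f := g) (Finset.mem_univ i) i)).ne'

end MaxCone

section Eigen

variable {A : Matrix (Fin n) (Fin n) ℝ≥0} {W : Set (Fin n → ℝ≥0)}

theorem MaxCone.exists_smul_le_maxMul_of_iterate (hW : MaxCone W)
    (hinv : MapsTo (maxMul A) W W) {w : Fin n → ℝ≥0} (hw : w ∈ W) {μ : ℝ≥0} (hμ : μ ≠ 0) {p : ℕ}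
    (hp : μ ^ (p + 1) • w ≤ (maxMul A)^[p + 1] w) :
    ∃ z ∈ W, w ≤ z ∧ μ • z ≤ maxMul A z := by
  -- `z = ⊔_{t ≤ p} μ⁻ᵗ Aᵗ w`; each term is at most `μ⁻¹ (A z)`, using `hp` for `t = 0`.
  set f : ℕ → Fin n → ℝ≥0 := fun t => (μ⁻¹) ^ t • (maxMul A)^[t] w
  set z := (Finset.range (p + 1)).sup f
  have hfz {t : ℕ} (ht : t ≤ p) : f t ≤ z := Finset.le_sup (Finset.mem_range_succ_iff.2 ht)
  refine ⟨z, hW.finset_sup_mem _ fun t _ => hW.smul_mem _ (hinv.iterate t hw),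
    by simpa [f] using hfz p.zero_le, ?_⟩
  rw [← le_inv_smul_iff_of_pos (pos_of_ne_zero hμ)]
  refine Finset.sup_le fun t ht => ?_
  cases t with
  | zero =>
    calc f 0 = (μ⁻¹) ^ (p + 1) • μ ^ (p + 1) • w := by simp [f, smul_smul, hμ]
      _ ≤ (μ⁻¹) ^ (p + 1) • (maxMul A)^[p + 1] w := smul_le_smul_of_nonneg_left hp zero_le
      _ = μ⁻¹ • maxMul A (f p) := by
        rw [maxMul_smul, ← iterate_succ_apply' (maxMul A), smul_smul, pow_succ']
      _ ≤ μ⁻¹ • maxMul A z := smul_le_smul_of_nonneg_left (maxMul_mono (hfz le_rfl)) zero_le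
  | succ s =>
    calc f (s + 1) = μ⁻¹ • maxMul A (f s) := by
          rw [maxMul_smul, ← iterate_succ_apply' (maxMul A), smul_smul, ← pow_succ']
      _ ≤ μ⁻¹ • maxMul A z := by
        have hs : s ≤ p := (Nat.succ_lt_succ_iff.1 (Finset.mem_range.1 ht)).le
        exact smul_le_smul_of_nonneg_left (maxMul_mono (hfz hs)) zero_le

def subeigenvalues (A : Matrix (Fin n) (Fin n) ℝ≥0) (W : Set (Fin n → ℝ≥0)) : Set ℝ≥0 :=
  {μ | ∃ z ∈ W, z ≠ 0 ∧ μ • z ≤ maxMul A z}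

theorem MaxCone.exists_isGreatest_subeigenvalues (hW : MaxCone W) (hcl : IsClosed W)
    (hnz : ∃ w ∈ W, w ≠ 0) : ∃ lam, IsGreatest (subeigenvalues A W) lam := by
  set K := {q : ℝ≥0 × (Fin n → ℝ≥0) | q.2 ∈ W ∧ supNorm q.2 = 1 ∧ q.1 • q.2 ≤ maxMul A q.2}
  have hK : subeigenvalues A W = Prod.fst '' K := by
    ext μ
    constructor
    · rintro ⟨z, hzW, hz0, hz⟩
      refine ⟨(μ, (supNorm z)⁻¹ • z),
        ⟨hW.smul_mem _ hzW, supNorm_inv_smul_self hz0, ?_⟩, rfl⟩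
      rw [maxMul_smul, smul_comm]
      exact smul_le_smul_of_nonneg_left hz zero_le
    · rintro ⟨⟨μ, z⟩, ⟨hzW, hz1, hz⟩, rfl⟩
      exact ⟨z, hzW, fun h => by simp [h, supNorm_eq_zero.2] at hz1, hz⟩
  have hKbdd : K ⊆ Icc 0 (supNorm (maxMul A 1)) ×ˢ Icc 0 1 := by
    rintro ⟨μ, z⟩ ⟨-, hz1, hz⟩
    refine ⟨⟨zero_le, ?_⟩, zero_le, by simpa [hz1] using le_supNorm_smul_one z⟩
    calc μ = supNorm (μ • z) := by simp [supNorm_smul, hz1]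
      _ ≤ supNorm (supNorm z • maxMul A 1) := by
        refine supNorm_mono (hz.trans ?_)
        simpa [maxMul_smul] using maxMul_mono (le_supNorm_smul_one z)
      _ = supNorm (maxMul A 1) := by simp [hz1]
  have hKcl : IsClosed K :=
    (hcl.preimage continuous_snd).inter <|
      (isClosed_eq (continuous_supNorm.comp continuous_snd) continuous_const).inter <|
        isClosed_le (continuous_fst.smul continuous_snd) (continuous_maxMul.comp continuous_snd)
  have hKc : IsCompact K := (isCompact_Icc.prod isCompact_Icc).of_isClosed_subset hKcl hKbdd
  obtain ⟨w, hwW, hw0⟩ := hnz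
  have hne : (subeigenvalues A W).Nonempty := ⟨0, w, hwW, hw0, by simp⟩
  rw [hK] at hne ⊢
  exact (hKc.image continuous_fst).exists_isGreatest hne

theorem IsGreatest.inv_smul_subeigenvalues {lam : ℝ≥0}
    (h : IsGreatest (subeigenvalues A W) lam) (hlam : lam ≠ 0) :
    IsGreatest (subeigenvalues (lam⁻¹ • A) W) 1 := by
  have hpos := pos_of_ne_zero hlam
  obtain ⟨v, hv, hv0, hle⟩ := h.1
  refine ⟨⟨v, hv, hv0, by rwa [smul_maxMul, one_smul, le_inv_smul_iff_of_pos hpos]⟩, ?_⟩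
  rintro δ ⟨z, hz, hz0, hle⟩
  rw [smul_maxMul, le_inv_smul_iff_of_pos hpos, smul_smul] at hle
  exact (mul_le_iff_le_one_right hpos).1 (h.2 ⟨z, hz, hz0, hle⟩)

end Eigen

section Orbit

variable {A : Matrix (Fin n) (Fin n) ℝ≥0} {W : Set (Fin n → ℝ≥0)}

theorem IsClosed.exists_fixedPoint_of_bddAbove (hcl : IsClosed W)
    (hinv : MapsTo (maxMul A) W W) {v : Fin n → ℝ≥0} (hv : v ∈ W)
    (hmono : Monotone fun k => (maxMul A)^[k] v)
    (hbdd : BddAbove (range fun k => (maxMul A)^[k] v)) :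
    ∃ u ∈ W, v ≤ u ∧ maxMul A u = u := by
  have hlim := tendsto_atTop_ciSup hmono hbdd
  refine ⟨_, hcl.mem_of_tendsto hlim (.of_forall fun k => hinv.iterate k hv),
    le_ciSup hbdd 0, ?_⟩
  refine tendsto_nhds_unique ((continuous_maxMul.tendsto _).comp hlim) ?_
  simpa only [comp_def, iterate_succ_apply'] using hlim.comp (tendsto_add_atTop_nat 1)

theorem IsClosed.exists_ne_zero_support_subset_of_not_bddAbove (hcl : IsClosed W)
    (hW : MaxCone W) {u : ℕ → Fin n → ℝ≥0} (hu : Monotone u) (huW : ∀ k, u k ∈ W)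
    (hbdd : ¬BddAbove (range u)) :
    ∃ y ∈ W, y ≠ 0 ∧ support y ⊆ {i | ¬BddAbove (range fun k => u k i)} := by
  set N := fun k => supNorm (u k)
  have hN : Tendsto N atTop atTop := by
    refine tendsto_atTop_atTop_of_monotone (fun a b h => supNorm_mono (hu h)) fun b => ?_
    by_contra! h
    refine hbdd ⟨b • 1, ?_⟩
    rintro _ ⟨k, rfl⟩
    exact (le_supNorm_smul_one _).trans (smul_le_smul_of_nonneg_right (h k).le zero_le)
  set y := fun k => (N k)⁻¹ • u k
  have hy (k : ℕ) : y k ∈ W ∩ Icc 0 1 := by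
    refine ⟨hW.smul_mem _ (huW k), zero_le, fun i => ?_⟩
    by_cases hk : N k = 0
    · simp [y, hk]
    · show (N k)⁻¹ * u k i ≤ 1
      rw [inv_mul_le_iff₀ (pos_of_ne_zero hk), mul_one]
      exact le_supNorm (u k) i
  obtain ⟨y₀, ⟨hy₀W, -⟩, φ, hφ, hlim⟩ := (isCompact_Icc.inter_left hcl).tendsto_subseq hy
  have hNφ := hN.comp hφ.tendsto_atTop
  have hy₀ : supNorm y₀ = 1 := by
    refine tendsto_nhds_unique ((continuous_supNorm.tendsto _).comp hlim)
      (tendsto_const_nhds.congr' ((hNφ.eventually_ne_atTop 0).mono fun k hk => ?_))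
    simp only [y, comp_apply, supNorm_smul]
    exact (inv_mul_cancel₀ hk).symm
  refine ⟨y₀, hy₀W, fun h => by simp [h, supNorm_eq_zero.2] at hy₀,
    fun i hi ⟨M, hM⟩ => hi ?_⟩
  have hMφ : Tendsto (fun k => (N (φ k))⁻¹ * M) atTop (𝓝 0) := by
    simpa using (tendsto_inv_atTop_zero.comp hNφ).mul_const M
  have hlim_i := ((continuous_apply i).tendsto _).comp hlim
  exact le_antisymm (le_of_tendsto_of_tendsto' hlim_i hMφ
    fun k => mul_le_mul_right (hM ⟨φ k, rfl⟩) _) zero_le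

theorem isInvariantSupport_setOf_not_bddAbove (A : Matrix (Fin n) (Fin n) ℝ≥0)
    (v : Fin n → ℝ≥0) :
    IsInvariantSupport A {i | ¬BddAbove (range fun k => (maxMul A)^[k] v i)} := by
  intro i j hj hA ⟨M, hM⟩
  refine hj ⟨(A i j)⁻¹ * M, ?_⟩
  rintro _ ⟨k, rfl⟩
  rw [le_inv_mul_iff₀ (pos_of_ne_zero hA)]
  calc A i j * (maxMul A)^[k] v j ≤ maxMul A ((maxMul A)^[k] v) i := mul_le_maxMul _ _ i j
    _ = (maxMul A)^[k + 1] v i := by rw [iterate_succ_apply']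
    _ ≤ M := hM ⟨k + 1, rfl⟩

theorem eventually_smul_le_of_not_bddAbove {u : ℕ → Fin n → ℝ≥0} (hu : Monotone u)
    {w : Fin n → ℝ≥0} (hw : ∀ i ∈ support w, ¬BddAbove (range fun k => u k i)) (C : ℝ≥0) :
    ∀ᶠ k in atTop, C • w ≤ u k := by
  refine eventually_all.2 fun i => ?_
  by_cases hi : w i = 0
  · simp [hi]
  refine (tendsto_atTop_atTop_of_monotone (fun a b h => hu h i) fun b => ?_).eventually_ge_atTop
    (C * w i)
  obtain ⟨_, ⟨k, rfl⟩, hk⟩ := not_bddAbove_iff.1 (hw i hi) b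
  exact ⟨k, hk.le⟩

end Orbit

section Minimal

variable {A : Matrix (Fin n) (Fin n) ℝ≥0} {W : Set (Fin n → ℝ≥0)}

def IsSupportMinimal (A : Matrix (Fin n) (Fin n) ℝ≥0) (W : Set (Fin n → ℝ≥0)) : Prop :=
  ∀ T, IsInvariantSupport A T → (∃ v ∈ W, v ≠ 0 ∧ support v ⊆ T) → ∀ v ∈ W, support v ⊆ T

theorem exists_isSupportMinimal_supportedIn (hnz : ∃ w ∈ W, w ≠ 0) :
    ∃ T, IsInvariantSupport A T ∧ (∃ v ∈ supportedIn W T, v ≠ 0) ∧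
      IsSupportMinimal A (supportedIn W T) := by
  obtain ⟨w, hw, hw0⟩ := hnz
  obtain ⟨T, ⟨hT, hne⟩, hmin⟩ :=
    (toFinite {T | IsInvariantSupport A T ∧ ∃ v ∈ supportedIn W T, v ≠ 0}).exists_minimal
      ⟨univ, fun _ _ _ _ => trivial, w, ⟨hw, subset_univ _⟩, hw0⟩
  refine ⟨T, hT, hne, fun T' hT' ⟨v, hv, hv0, hvT'⟩ u hu => hu.2.trans ?_⟩
  exact (hmin ⟨hT.inter hT', v, ⟨hv.1, subset_inter hv.2 hvT'⟩, hv0⟩ inter_subset_left).trans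
    inter_subset_right

theorem IsSupportMinimal.smul (hmin : IsSupportMinimal A W) {r : ℝ≥0} (hr : r ≠ 0) :
    IsSupportMinimal (r • A) W :=
  fun T hT => hmin T ((isInvariantSupport_smul_iff hr).1 hT)

theorem IsSupportMinimal.exists_smul_le_maxMul (hmin : IsSupportMinimal A W)
    (hinv : MapsTo (maxMul A) W W) {w : Fin n → ℝ≥0} (hw : w ∈ W)
    (hwmax : ∀ v ∈ W, support v ⊆ support w) (hAw : maxMul A w ≠ 0) :
    ∃ ε : ℝ≥0, ε ≠ 0 ∧ ε • w ≤ maxMul A w := by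
  refine exists_smul_le_of_support_subset
    (hmin _ (fun i j hj hA => ?_) ⟨_, hinv hw, hAw, subset_rfl⟩ w hw)
  have hwj : w j ≠ 0 := hwmax _ (hinv hw) hj
  exact ((pos_of_ne_zero (mul_ne_zero hA hwj)).trans_le (mul_le_maxMul A w i j)).ne'

theorem IsSupportMinimal.exists_fixedPoint (hmin : IsSupportMinimal A W) (hW : MaxCone W)
    (hcl : IsClosed W) (hinv : MapsTo (maxMul A) W W) {w : Fin n → ℝ≥0} (hw : w ∈ W)
    (hwmax : ∀ v ∈ W, support v ⊆ support w) (h1 : IsGreatest (subeigenvalues A W) 1) :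
    ∃ u ∈ W, u ≠ 0 ∧ maxMul A u = u := by
  obtain ⟨v, hvW, hv0, hv⟩ := h1.1
  rw [one_smul] at hv
  have hw0 := ne_zero_of_support_subset hv0 (hwmax v hvW)
  set u := fun k => (maxMul A)^[k] v
  have hu : Monotone u := monotone_nat_of_le_succ fun k => by
    simpa only [u, iterate_succ_apply] using maxMul_mono.iterate k hv
  by_cases hbdd : BddAbove (range u)
  · obtain ⟨u₀, hu₀W, hvu₀, hfix⟩ := hcl.exists_fixedPoint_of_bddAbove hinv hvW hu hbdd
    exact ⟨u₀, hu₀W, ne_zero_of_le hv0 hvu₀, hfix⟩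
  exfalso
  obtain ⟨y, hyW, hy0, hyU⟩ :=
    hcl.exists_ne_zero_support_subset_of_not_bddAbove hW hu (fun k => hinv.iterate k hvW) hbdd
  have hwU := hmin _ (isInvariantSupport_setOf_not_bddAbove A v) ⟨y, hyW, hy0, hyU⟩ w hw
  obtain ⟨c, hc0, hcv⟩ := exists_smul_le_of_support_subset (hwmax v hvW)
  obtain ⟨p, hp⟩ := eventually_atTop.1 (eventually_smul_le_of_not_bddAbove hu hwU (2 * c⁻¹))
  have h2 : (2 : ℝ≥0) • w ≤ (maxMul A)^[p + 1] w :=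
    calc (2 : ℝ≥0) • w = c • (2 * c⁻¹) • w := by
          rw [smul_smul, mul_left_comm, mul_inv_cancel₀ hc0, mul_one]
      _ ≤ c • u (p + 1) := smul_le_smul_of_nonneg_left (hp _ p.le_succ) zero_le
      _ = (maxMul A)^[p + 1] (c • v) := (iterate_maxMul_smul _ _ _).symm
      _ ≤ (maxMul A)^[p + 1] w := maxMul_mono.iterate _ hcv
  set δ : ℝ≥0 := 2 ^ ((p + 1 : ℕ) : ℝ)⁻¹
  have hδ : 1 < δ := NNReal.one_lt_rpow one_lt_two (by positivity)
  obtain ⟨z, hzW, hwz, hz⟩ := hW.exists_smul_le_maxMul_of_iterate hinv hw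
    (zero_lt_one.trans hδ).ne' (by rwa [NNReal.rpow_inv_natCast_pow _ p.succ_ne_zero])
  exact hδ.not_ge (h1.2 ⟨z, hzW, ne_zero_of_le hw0 hwz, hz⟩)

theorem IsSupportMinimal.exists_eigenvector (hmin : IsSupportMinimal A W) (hW : MaxCone W)
    (hcl : IsClosed W) (hinv : MapsTo (maxMul A) W W) (hnz : ∃ w ∈ W, w ≠ 0) :
    ∃ u ∈ W, u ≠ 0 ∧ ∃ lam : ℝ≥0, maxMul A u = lam • u := by
  obtain ⟨w, hw, hwmax⟩ := hW.exists_forall_support_subset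
  obtain ⟨lam, hlam⟩ := hW.exists_isGreatest_subeigenvalues (A := A) hcl hnz
  rcases eq_or_ne lam 0 with rfl | hlam0
  · obtain ⟨v, hv, hv0⟩ := hnz
    have hw0 := ne_zero_of_support_subset hv0 (hwmax v hv)
    by_cases hAw : maxMul A w = 0
    · exact ⟨w, hw, hw0, 0, by simp [hAw]⟩
    obtain ⟨ε, hε, hεw⟩ := hmin.exists_smul_le_maxMul hinv hw hwmax hAw
    exact absurd (hlam.2 ⟨w, hw, hw0, hεw⟩) (by simpa using hε)
  obtain ⟨u, hu, hu0, hfix⟩ := (hmin.smul (inv_ne_zero hlam0)).exists_fixedPoint hW hcl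
    (hW.mapsTo_smul hinv _) hw hwmax (hlam.inv_smul_subeigenvalues hlam0)
  rw [smul_maxMul] at hfix
  exact ⟨u, hu, hu0, lam, by rw [← smul_inv_smul₀ hlam0 (maxMul A u), hfix]⟩

end Minimal

theorem stmt12 {n : ℕ} (A : Matrix (Fin n) (Fin n) ℝ≥0) (W : Set (Fin n → ℝ≥0))
    (hW : MaxCone W) (hcl : IsClosed W) (hnz : ∃ w ∈ W, w ≠ 0)
    (hinv : ∀ v ∈ W, maxMul A v ∈ W) :
    ∃ u ∈ W, u ≠ 0 ∧ ∃ lam : ℝ≥0, maxMul A u = lam • u := by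
  obtain ⟨T, hT, hne, hmin⟩ := exists_isSupportMinimal_supportedIn (A := A) hnz
  obtain ⟨u, hu, hu0, hlam⟩ := hmin.exists_eigenvector (hW.supportedIn T) (hcl.supportedIn T)
    (fun v hv => ⟨hinv v hv.1, hT.support_maxMul_subset hv.2⟩) hne
  exact ⟨u, hu.1, hu0, hlam⟩
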